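/- Let (f_n) be a uniformly equicontinuous sequence of functions [0,1] → [0,1] with modulus φ'. If (f_n) converges pointwise on the dyadic rationals with an explicit rate, then for each k the modulus of uniform Cauchyness can be bounded: if (f_n(y)) is 2^{-(k+2)}-Cauchy beyond m simultaneously for all y in the finite grid Y = { i·2^{-(φ'(k+2)+1)} : 0 ≤ i ≤ 2^{φ'(k+2)+1} }, then ‖f_n - f_{n'}‖_∞ < 2^{-k} for all n,n' > m. -/

import Mathlib

/-!
Every point of `[0,1]` lies within `2^{-(φ'(k+2)+1)} < 2^{-φ'(k+2)}` of a grid point `y`, so by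
equicontinuity `f_n x` and `f_{n'} x` are each within `2^{-(k+2)}` of `f_n y` and `f_{n'} y`,
which are themselves `2^{-(k+2)}`-close. Hence `|f_n x - f_{n'} x| < 3 · 2^{-(k+2)} < 2^{-k}`.
-/

open Set

theorem dist_lt_three_mul_of_net {X Y : Type*} [PseudoMetricSpace X] [PseudoMetricSpace Y]
    {g h : X → Y} {S : Set X} {δ ε : ℝ}
    (hg : ∀ x ∈ S, ∀ y ∈ S, dist x y < δ → dist (g x) (g y) < ε)
    (hh : ∀ x ∈ S, ∀ y ∈ S, dist x y < δ → dist (h x) (h y) < ε)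
    {x : X} (hx : x ∈ S) (hnet : ∃ y ∈ S, dist x y < δ ∧ dist (g y) (h y) < ε) :
    dist (g x) (h x) < 3 * ε := by
  obtain ⟨y, hy, hxy, hgh⟩ := hnet
  calc dist (g x) (h x) ≤ dist (g x) (g y) + dist (g y) (h y) + dist (h y) (h x) :=
        dist_triangle4 _ _ _ _
    _ < ε + ε + ε := by
        gcongr
        · exact hg x hx y hy hxy
        · rw [dist_comm]; exact hh x hx y hy hxy
    _ = 3 * ε := by ring

theorem exists_dyadic_grid_point_abs_sub_lt (N : ℕ) {x : ℝ} (hx : x ∈ Icc (0:ℝ) 1) :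
    ∃ i : ℕ, i ≤ 2 ^ N ∧ (i : ℝ) * (2:ℝ) ^ (-(N:ℤ)) ∈ Icc (0:ℝ) 1 ∧
      |x - i * (2:ℝ) ^ (-(N:ℤ))| < (2:ℝ) ^ (-(N:ℤ)) := by
  have hpos : (0:ℝ) < 2 ^ N := by positivity
  have hfloor_le : (⌊x * 2 ^ N⌋₊ : ℝ) ≤ x * 2 ^ N := Nat.floor_le (mul_nonneg hx.1 hpos.le)
  have hlt_floor : x * 2 ^ N < ⌊x * 2 ^ N⌋₊ + 1 := Nat.lt_floor_add_one _
  refine ⟨⌊x * 2 ^ N⌋₊, ?_, ?_, ?_⟩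
  · exact Nat.floor_le_of_le (by push_cast; nlinarith [hx.2])
  all_goals
    rw [zpow_neg, zpow_natCast, ← div_eq_mul_inv]
  · constructor
    · positivity
    · rw [div_le_one hpos]; nlinarith [hx.2]
  · have hle : (⌊x * 2 ^ N⌋₊ : ℝ) / 2 ^ N ≤ x := by rwa [div_le_iff₀ hpos]
    have hlt : x < (⌊x * 2 ^ N⌋₊ : ℝ) / 2 ^ N + (2 ^ N)⁻¹ := by
      rwa [inv_eq_one_div, ← add_div, lt_div_iff₀ hpos]
    rw [abs_sub_lt_iff]
    constructor <;> linarith [inv_pos.mpr hpos]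

theorem three_mul_two_zpow_neg_add_two_lt (k : ℤ) :
    3 * (2:ℝ) ^ (-(k + 2)) < (2:ℝ) ^ (-k) := by
  rw [neg_add, zpow_add₀ two_ne_zero]
  have : (0:ℝ) < 2 ^ (-k) := by positivity
  rw [show (2:ℝ) ^ (-2:ℤ) = 1 / 4 by norm_num]
  linarith

theorem stmt15_general (f : ℕ → ℝ → ℝ) (φ' : ℕ → ℕ)
    (hequi : ∀ l : ℕ, ∀ n : ℕ, ∀ x ∈ Icc (0:ℝ) 1, ∀ y ∈ Icc (0:ℝ) 1,
      |x - y| < (2:ℝ)^(-(φ' l : ℤ)) → |f n x - f n y| < (2:ℝ)^(-(l:ℤ)))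
    (k m : ℕ)
    -- (f_n(y)) is 2^{-(k+2)}-Cauchy beyond m simultaneously for all grid points y
    (hgrid : ∀ n > m, ∀ n' > m, ∀ i : ℕ, i ≤ 2^(φ' (k+2) + 1) →
      |f n ((i : ℝ) * (2:ℝ)^(-((φ' (k+2) : ℤ)+1))) -
        f n' ((i : ℝ) * (2:ℝ)^(-((φ' (k+2) : ℤ)+1)))| < (2:ℝ)^(-((k:ℤ)+2))) :
    ∀ n > m, ∀ n' > m,
      sSup ((fun x => |f n x - f n' x|) '' Icc (0:ℝ) 1) < (2:ℝ)^(-(k:ℤ)) := by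
  intro n hn n' hn'
  have hequi_dist : ∀ n, ∀ x ∈ Icc (0:ℝ) 1, ∀ y ∈ Icc (0:ℝ) 1,
      dist x y < (2:ℝ) ^ (-(φ' (k + 2) : ℤ)) → dist (f n x) (f n y) < (2:ℝ) ^ (-((k:ℤ) + 2)) := by
    intro n x hx y hy hxy
    simpa [Real.dist_eq] using hequi (k + 2) n x hx y hy hxy
  have hbound : ∀ x ∈ Icc (0:ℝ) 1, |f n x - f n' x| ≤ 3 * (2:ℝ) ^ (-((k:ℤ) + 2)) := by
    intro x hx
    obtain ⟨i, hi, hyI, hxy⟩ := exists_dyadic_grid_point_abs_sub_lt (φ' (k + 2) + 1) hx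
    push_cast at hi hyI hxy
    refine (dist_lt_three_mul_of_net (hequi_dist n) (hequi_dist n') hx ⟨_, hyI, ?_, ?_⟩).le
    · exact hxy.trans (zpow_lt_zpow_right₀ one_lt_two (by omega))
    · exact hgrid n hn n' hn' i hi
  calc sSup ((fun x => |f n x - f n' x|) '' Icc (0:ℝ) 1)
      ≤ 3 * (2:ℝ) ^ (-((k:ℤ) + 2)) :=
        Real.sSup_le (forall_mem_image.mpr hbound) (by positivity)
    _ < (2:ℝ) ^ (-(k:ℤ)) := three_mul_two_zpow_neg_add_two_lt k

theorem stmt15 (f : ℕ → ℝ → ℝ) (φ' : ℕ → ℕ)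
    (hmap : ∀ n, ∀ x ∈ Icc (0:ℝ) 1, f n x ∈ Icc (0:ℝ) 1)
    (hequi : ∀ l : ℕ, ∀ n : ℕ, ∀ x ∈ Icc (0:ℝ) 1, ∀ y ∈ Icc (0:ℝ) 1,
      |x - y| < (2:ℝ)^(-(φ' l : ℤ)) → |f n x - f n y| < (2:ℝ)^(-(l:ℤ)))
    (k m : ℕ)
    -- (f_n(y)) is 2^{-(k+2)}-Cauchy beyond m simultaneously for all grid points y
    (hgrid : ∀ n > m, ∀ n' > m, ∀ i : ℕ, i ≤ 2^(φ' (k+2) + 1) →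
      |f n ((i : ℝ) * (2:ℝ)^(-((φ' (k+2) : ℤ)+1))) -
        f n' ((i : ℝ) * (2:ℝ)^(-((φ' (k+2) : ℤ)+1)))| < (2:ℝ)^(-((k:ℤ)+2))) :
    ∀ n > m, ∀ n' > m,
      sSup ((fun x => |f n x - f n' x|) '' Icc (0:ℝ) 1) < (2:ℝ)^(-(k:ℤ)) :=
  stmt15_general f φ' hequi k m hgrid
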